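/- arXiv:1103.4476 — 8 statements merged into one kernel-verified Lean document; each statement's English description precedes it below -/
import Mathlib

section
/- Let A be a 2×2 real matrix with trace A < 0 and det A > 0. Then the linear system x'(t) = A·x(t) is globally asymptotically stable: every differentiable solution x : ℝ → ℝ² of x'(t) = A·x(t) satisfies x(t) → 0 as t → +∞. -/
/-!
By Cayley–Hamilton, `A * A = (trace A) • A - (det A) • 1`, so along a solution the quadratic form
`V x = det A * (x ⬝ᵥ x) + A x ⬝ᵥ A x` has derivative `2 * trace A * (A x ⬝ᵥ A x) ≤ 0`.
Since `det A • x = adjugate A *ᵥ (A *ᵥ x)`, the term `A x ⬝ᵥ A x` dominates a positive multiple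
of `V`, so `V' ≤ -κ V` for some `κ > 0`. Hence `V`, and with it `det A * (x ⬝ᵥ x) ≤ V`, decays
exponentially.
-/

open Filter Topology Matrix Real

section Derivatives

variable {𝕜 n : Type*} [NontriviallyNormedField 𝕜] [Fintype n] {y z : 𝕜 → n → 𝕜} {y' z' : n → 𝕜}
  {t : 𝕜}

theorem HasDerivAt.dotProduct (hy : HasDerivAt y y' t) (hz : HasDerivAt z z' t) :
    HasDerivAt (fun s => y s ⬝ᵥ z s) (y' ⬝ᵥ z t + y t ⬝ᵥ z') t := by
  refine (HasDerivAt.fun_sum (u := Finset.univ) fun i _ =>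
    (hasDerivAt_pi.1 hy i).fun_mul (hasDerivAt_pi.1 hz i)).congr_deriv ?_
  exact Finset.sum_add_distrib

theorem HasDerivAt.const_mulVec {m : Type*} (A : Matrix m n 𝕜) (hy : HasDerivAt y y' t) :
    HasDerivAt (fun s => A *ᵥ y s) (A *ᵥ y') t :=
  hasDerivAt_pi.2 fun i =>
    HasDerivAt.fun_sum (u := Finset.univ) fun j _ => (hasDerivAt_pi.1 hy j).const_mul (A i j)

end Derivatives

theorem antitone_mul_exp_of_hasDerivAt_le {f f' : ℝ → ℝ} {κ : ℝ}
    (hf : ∀ t, HasDerivAt f (f' t) t) (hle : ∀ t, f' t ≤ -κ * f t) :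
    Antitone fun t => f t * exp (κ * t) := by
  have hg : ∀ t, HasDerivAt (fun t => f t * exp (κ * t))
      ((f' t + κ * f t) * exp (κ * t)) t := fun t => by
    refine ((hf t).fun_mul ((hasDerivAt_id' t).const_mul κ).exp).congr_deriv ?_
    ring
  refine antitone_of_deriv_nonpos (fun t => (hg t).differentiableAt) fun t => ?_
  rw [(hg t).deriv]
  exact mul_nonpos_of_nonpos_of_nonneg (by linarith [hle t]) (exp_pos _).le

theorem tendsto_zero_of_hasDerivAt_le_neg_mul {f f' : ℝ → ℝ} {κ : ℝ} (hκ : 0 < κ)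
    (hf_nonneg : ∀ t, 0 ≤ f t) (hf : ∀ t, HasDerivAt f (f' t) t)
    (hle : ∀ t, f' t ≤ -κ * f t) : Tendsto f atTop (𝓝 0) := by
  have hbound : ∀ t, 0 ≤ t → f t ≤ f 0 * exp (-κ * t) := fun t ht => by
    have := antitone_mul_exp_of_hasDerivAt_le hf hle ht
    simp only [mul_zero, exp_zero, mul_one] at this
    calc f t = f t * exp (κ * t) * exp (-κ * t) := by
          rw [mul_assoc, ← exp_add]; simp
      _ ≤ f 0 * exp (-κ * t) := by gcongr
  have hdecay : Tendsto (fun t => f 0 * exp (-κ * t)) atTop (𝓝 0) := by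
    have hexp := tendsto_exp_atBot.comp (tendsto_id.const_mul_atTop_of_neg (neg_neg_of_pos hκ))
    simpa using hexp.const_mul (f 0)
  exact tendsto_of_tendsto_of_tendsto_of_le_of_le' tendsto_const_nhds hdecay
    (Eventually.of_forall hf_nonneg) ((eventually_ge_atTop 0).mono hbound)

theorem tendsto_zero_of_tendsto_dotProduct_self {α n : Type*} [Fintype n] {l : Filter α}
    {y : α → n → ℝ} (hy : Tendsto (fun a => y a ⬝ᵥ y a) l (𝓝 0)) : Tendsto y l (𝓝 0) := by
  refine squeeze_zero_norm (fun a => ?_) (by simpa using hy.sqrt)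
  refine (pi_norm_le_iff_of_nonneg (sqrt_nonneg _)).2 fun i => ?_
  rw [Real.norm_eq_abs, ← sqrt_sq_eq_abs]
  refine sqrt_le_sqrt ?_
  simpa [dotProduct, sq] using Finset.single_le_sum (f := fun j => y a j * y a j)
    (fun j _ => mul_self_nonneg _) (Finset.mem_univ i)

theorem Matrix.mul_self_fin_two {R : Type*} [CommRing R] [Nontrivial R]
    (A : Matrix (Fin 2) (Fin 2) R) : A * A = A.trace • A - A.det • 1 := by
  have hCH := A.aeval_self_charpoly
  rw [charpoly_fin_two] at hCH
  simp only [map_add, map_sub, map_pow, Polynomial.aeval_X, Polynomial.aeval_C,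
    map_mul, Algebra.algebraMap_eq_smul_one, smul_mul_assoc, one_mul] at hCH
  rw [← sub_eq_zero, ← hCH, sq]
  abel

theorem Matrix.mulVec_mulVec_fin_two {R : Type*} [CommRing R] [Nontrivial R]
    (A : Matrix (Fin 2) (Fin 2) R) (v : Fin 2 → R) :
    A *ᵥ A *ᵥ v = A.trace • A *ᵥ v - A.det • v := by
  rw [mulVec_mulVec, mul_self_fin_two, sub_mulVec, smul_mulVec, smul_mulVec, one_mulVec]

theorem Matrix.mulVec_dotProduct_self_le {m n : Type*} [Fintype m] [Fintype n]
    (B : Matrix m n ℝ) (w : n → ℝ) :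
    B *ᵥ w ⬝ᵥ B *ᵥ w ≤ (∑ i, ∑ j, B i j ^ 2) * (w ⬝ᵥ w) := by
  calc B *ᵥ w ⬝ᵥ B *ᵥ w = ∑ i, (∑ j, B i j * w j) ^ 2 := by simp only [dotProduct, mulVec, sq]
    _ ≤ ∑ i, (∑ j, B i j ^ 2) * ∑ j, w j ^ 2 :=
      Finset.sum_le_sum fun i _ => Finset.sum_mul_sq_le_sq_mul_sq _ _ _
    _ = (∑ i, ∑ j, B i j ^ 2) * (w ⬝ᵥ w) := by simp only [← Finset.sum_mul, dotProduct, sq]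

theorem Matrix.det_sq_mul_dotProduct_self_le {n : Type*} [Fintype n] [DecidableEq n]
    (A : Matrix n n ℝ) (v : n → ℝ) :
    A.det ^ 2 * (v ⬝ᵥ v) ≤ (∑ i, ∑ j, A.adjugate i j ^ 2) * (A *ᵥ v ⬝ᵥ A *ᵥ v) := by
  have hv : A.adjugate *ᵥ A *ᵥ v = A.det • v := by
    rw [mulVec_mulVec, adjugate_mul, smul_mulVec, one_mulVec]
  calc A.det ^ 2 * (v ⬝ᵥ v) = A.det • v ⬝ᵥ A.det • v := by
        rw [smul_dotProduct, dotProduct_smul, smul_eq_mul, smul_eq_mul, ← mul_assoc, sq]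
    _ ≤ _ := hv ▸ A.adjugate.mulVec_dotProduct_self_le _

section Lyapunov

variable (A : Matrix (Fin 2) (Fin 2) ℝ)

def planarLyapunov (v : Fin 2 → ℝ) : ℝ :=
  A.det * (v ⬝ᵥ v) + A *ᵥ v ⬝ᵥ A *ᵥ v

theorem hasDerivAt_planarLyapunov {x : ℝ → Fin 2 → ℝ} {t : ℝ}
    (hx : HasDerivAt x (A *ᵥ x t) t) :
    HasDerivAt (fun s => planarLyapunov A (x s)) (2 * A.trace * (A *ᵥ x t ⬝ᵥ A *ᵥ x t)) t := by
  have hAx := hx.const_mulVec A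
  refine (((hx.dotProduct hx).const_mul A.det).add (hAx.dotProduct hAx)).congr_deriv ?_
  rw [mulVec_mulVec_fin_two, sub_dotProduct, dotProduct_sub, smul_dotProduct, dotProduct_smul,
    smul_dotProduct, dotProduct_smul, dotProduct_comm (x t)]
  simp only [smul_eq_mul]
  ring

theorem det_mul_dotProduct_self_le_planarLyapunov (v : Fin 2 → ℝ) :
    A.det * (v ⬝ᵥ v) ≤ planarLyapunov A v :=
  le_add_of_nonneg_right (dotProduct_star_self_nonneg _)

theorem planarLyapunov_nonneg (hdet : 0 ≤ A.det) (v : Fin 2 → ℝ) : 0 ≤ planarLyapunov A v :=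
  (mul_nonneg hdet (dotProduct_star_self_nonneg _)).trans
    (det_mul_dotProduct_self_le_planarLyapunov A v)

theorem exists_pos_mul_planarLyapunov_le (htr : A.trace < 0) (hdet : 0 < A.det) :
    ∃ κ > 0, ∀ v, κ * planarLyapunov A v ≤ -(2 * A.trace) * (A *ᵥ v ⬝ᵥ A *ᵥ v) := by
  set m := ∑ i, ∑ j, A.adjugate i j ^ 2
  have hm : 0 < m + A.det := by positivity
  have hτ : 0 < -(2 * A.trace) := by linarith
  refine ⟨-(2 * A.trace) * A.det / (m + A.det), by positivity, fun v => ?_⟩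
  have hV : A.det * planarLyapunov A v ≤ (m + A.det) * (A *ᵥ v ⬝ᵥ A *ᵥ v) := by
    unfold planarLyapunov
    linear_combination A.det_sq_mul_dotProduct_self_le v
  rw [div_mul_eq_mul_div, div_le_iff₀ hm]
  linear_combination mul_le_mul_of_nonneg_left hV hτ.le

end Lyapunov

/-- Routh–Hurwitz criterion for the linearization of the SIS model about the endemic
equilibrium: a planar linear system `x' = A x` with `trace A < 0` and `det A > 0` is
globally asymptotically stable. -/
theorem planar_linear_trace_det_asymptotically_stable
    (A : Matrix (Fin 2) (Fin 2) ℝ) (htr : A.trace < 0) (hdet : 0 < A.det) :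
    ∀ x : ℝ → Fin 2 → ℝ,
      (∀ t : ℝ, HasDerivAt x (A.mulVec (x t)) t) →
      Filter.Tendsto x Filter.atTop (nhds 0) := by
  intro x hx
  obtain ⟨κ, hκ, hdecay⟩ := exists_pos_mul_planarLyapunov_le A htr hdet
  have hV : Tendsto (fun t => planarLyapunov A (x t)) atTop (𝓝 0) :=
    tendsto_zero_of_hasDerivAt_le_neg_mul hκ (fun t => planarLyapunov_nonneg A hdet.le _)
      (fun t => hasDerivAt_planarLyapunov A (hx t)) fun t => by linarith [hdecay (x t)]
  have hx_sq : Tendsto (fun t => x t ⬝ᵥ x t) atTop (𝓝 0) :=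
    squeeze_zero (fun t => dotProduct_star_self_nonneg _)
      (fun t => (le_inv_mul_iff₀ hdet).2 (det_mul_dotProduct_self_le_planarLyapunov A (x t)))
      (by simpa using hV.const_mul A.det⁻¹)
  exact tendsto_zero_of_tendsto_dotProduct_self hx_sq
end

section
/- (Positivity of the solutions of the epidemic model.) Assume γ(t) ≥ 0 for all t ≥ 0, S(0) ≥ 0 and I(0) ≥ 0. Then S(t) ≥ 0, I(t) ≥ 0 and N(t) ≥ 0 for all t ≥ 0. -/
/-!
Both equations are linear in the unknown they govern, once the other quantities are treated as
coefficients: `I' = a I` with `a = β S - d - γ`, and `S' = b S + γ I` with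
`b = r (1 - G / p) - β I`. Multiplying by the integrating factor `exp (-∫₀ᵗ a)` shows that a
solution of `x' = a x + f` with `f ≥ 0` and `x 0 ≥ 0` stays nonnegative. This gives `I ≥ 0`
first, and then, since the forcing term `γ I` is nonnegative, `S ≥ 0`.
-/

open Set

theorem monotoneOn_Ici_of_hasDerivAt_nonneg {f f' : ℝ → ℝ} {a : ℝ}
    (hf : ∀ t, a ≤ t → HasDerivAt f (f' t) t) (hf' : ∀ t, a ≤ t → 0 ≤ f' t) :
    MonotoneOn f (Ici a) := by
  refine monotoneOn_of_hasDerivWithinAt_nonneg (f' := f') (convex_Ici a)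
    (fun t ht => (hf t ht).continuousAt.continuousWithinAt) (fun t ht => ?_) (fun t ht => ?_)
  · rw [interior_Ici] at ht
    exact (hf t (ht.le)).hasDerivWithinAt
  · rw [interior_Ici] at ht
    exact hf' t (ht.le)

theorem exists_hasDerivAt_Ici_of_continuousOn {g : ℝ → ℝ} {a : ℝ} (hg : ContinuousOn g (Ici a)) :
    ∃ G : ℝ → ℝ, ∀ t, a ≤ t → HasDerivAt G (g t) t := by
  have hext : Continuous fun t => g (max t a) :=
    hg.comp_continuous (continuous_id.max continuous_const) fun t => le_max_right t a
  refine ⟨fun u => ∫ s in a..u, g (max s a), fun t ht => ?_⟩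
  simpa only [max_eq_left ht] using (hext.integral_hasStrictDerivAt a t).hasDerivAt

theorem nonneg_of_hasDerivAt_eq_mul_add {x c f : ℝ → ℝ} {a : ℝ} (hc : ContinuousOn c (Ici a))
    (hx : ∀ t, a ≤ t → HasDerivAt x (c t * x t + f t) t) (hf : ∀ t, a ≤ t → 0 ≤ f t)
    (hxa : 0 ≤ x a) : ∀ t, a ≤ t → 0 ≤ x t := by
  obtain ⟨C, hC⟩ := exists_hasDerivAt_Ici_of_continuousOn hc
  have hderiv : ∀ t, a ≤ t →
      HasDerivAt (fun s => Real.exp (-C s) * x s) (Real.exp (-C t) * f t) t := by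
    intro t ht
    have hexp : HasDerivAt (fun s => Real.exp (-C s)) (Real.exp (-C t) * -c t) t :=
      (hC t ht).neg.exp
    exact (hexp.mul (hx t ht)).congr_deriv (by ring)
  have hmono := monotoneOn_Ici_of_hasDerivAt_nonneg hderiv
    fun t ht => mul_nonneg (Real.exp_pos _).le (hf t ht)
  intro t ht
  have hle : Real.exp (-C a) * x a ≤ Real.exp (-C t) * x t :=
    hmono (mem_Ici.2 le_rfl) (mem_Ici.2 ht) ht
  exact nonneg_of_mul_nonneg_right
    ((mul_nonneg (Real.exp_pos _).le hxa).trans hle) (Real.exp_pos _)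

/-- Positivity of the solutions of the SIS epidemic model: if `γ ≥ 0` on `[0, ∞)`,
`S(0) ≥ 0` and `I(0) ≥ 0`, then `S(t) ≥ 0`, `I(t) ≥ 0` and `N(t) = S(t) + I(t) ≥ 0`
for all `t ≥ 0`. -/
theorem sis_positivity
    (r d γ β δ1 δ2 p S I : ℝ → ℝ)
    (hrc : Continuous r) (hdc : Continuous d) (hγc : Continuous γ) (hβc : Continuous β)
    (hδ1c : Continuous δ1) (hδ2c : Continuous δ2) (hpc : Continuous p)
    (hppos : ∀ t : ℝ, 0 ≤ t → 0 < p t)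
    (hS : ∀ t : ℝ, 0 ≤ t →
      HasDerivAt S (r t * (1 - (δ1 t * S t + δ2 t * I t) / p t) * S t
        + (γ t - β t * S t) * I t) t)
    (hI : ∀ t : ℝ, 0 ≤ t → HasDerivAt I ((β t * S t - d t - γ t) * I t) t)
    (hγpos : ∀ t : ℝ, 0 ≤ t → 0 ≤ γ t)
    (hS0 : 0 ≤ S 0) (hI0 : 0 ≤ I 0) :
    ∀ t : ℝ, 0 ≤ t → 0 ≤ S t ∧ 0 ≤ I t ∧ 0 ≤ S t + I t := by
  have hSc : ContinuousOn S (Ici 0) := fun t ht => (hS t ht).continuousAt.continuousWithinAt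
  have hIc : ContinuousOn I (Ici 0) := fun t ht => (hI t ht).continuousAt.continuousWithinAt
  have hInonneg : ∀ t, 0 ≤ t → 0 ≤ I t :=
    nonneg_of_hasDerivAt_eq_mul_add (c := fun t => β t * S t - d t - γ t) (f := 0)
      (by fun_prop) (fun t ht => by simpa using hI t ht) (fun _ _ => le_rfl) hI0
  have hSnonneg : ∀ t, 0 ≤ t → 0 ≤ S t := by
    refine nonneg_of_hasDerivAt_eq_mul_add
      (c := fun t => r t * (1 - (δ1 t * S t + δ2 t * I t) / p t) - β t * I t)
      (f := fun t => γ t * I t) ?_ (fun t ht => ?_)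
      (fun t ht => mul_nonneg (hγpos t ht) (hInonneg t ht)) hS0
    · fun_prop (disch := exact fun t ht => (hppos t ht).ne')
    · convert hS t ht using 1
      ring
  exact fun t ht => ⟨hSnonneg t ht, hInonneg t ht, add_nonneg (hSnonneg t ht) (hInonneg t ht)⟩
end

section
/- Assume γ(t) ≥ 0 for all t ≥ 0, S(0) ≥ 0 and I(0) ≥ 0. Then the following are equivalent: (a) N(0) = 0; (b) S(t) = 0 and I(t) = 0 for all t ≥ 0; (c) N(t) = 0 for all t ≥ 0. -/
/-!
Starting from `S(0) = I(0) = 0`, the SIS system is a linear system `(S, I)' = A(t) (S, I)` whose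
coefficients `A(t)` (which themselves involve `S` and `I`) are continuous, hence bounded on every
compact interval `[0, T]`; Grönwall's inequality then forces `(S, I) ≡ 0`. The converse
implications are evaluation at `t = 0` together with `S(0), I(0) ≥ 0`.
-/

open Set

theorem eq_zero_of_norm_deriv_le_mul_norm_of_continuousOn
    {E : Type*} [NormedAddCommGroup E] [NormedSpace ℝ E] {f f' : ℝ → E} {k : ℝ → ℝ} {a b : ℝ}
    (hk : ContinuousOn k (Icc a b)) (hf : ContinuousOn f (Icc a b))
    (hf' : ∀ x ∈ Ico a b, HasDerivWithinAt f (f' x) (Ici x) x) (ha : f a = 0)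
    (bound : ∀ x ∈ Ico a b, ‖f' x‖ ≤ k x * ‖f x‖) :
    ∀ x ∈ Icc a b, f x = 0 := by
  obtain ⟨K, hK⟩ := isCompact_Icc.bddAbove_image hk
  refine eq_zero_of_abs_deriv_le_mul_abs_self_of_eq_zero_right (K := K) hf hf' ha
    fun x hx => ?_
  calc ‖f' x‖ ≤ k x * ‖f x‖ := bound x hx
    _ ≤ K * ‖f x‖ := by
      gcongr
      exact hK (mem_image_of_mem k (Ico_subset_Icc_self hx))

theorem abs_mul_add_mul_le {a b u v m : ℝ} (hu : |u| ≤ m) (hv : |v| ≤ m) :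
    |a * u + b * v| ≤ (|a| + |b|) * m := by
  calc |a * u + b * v| ≤ |a| * |u| + |b| * |v| := by
        rw [← abs_mul, ← abs_mul]; exact abs_add_le _ _
    _ ≤ |a| * m + |b| * m := by gcongr
    _ = (|a| + |b|) * m := by ring

theorem eq_zero_of_hasDerivAt_planar_linear {u v a b c e : ℝ → ℝ} {t₀ t₁ : ℝ}
    (ha : ContinuousOn a (Icc t₀ t₁)) (hb : ContinuousOn b (Icc t₀ t₁))
    (hc : ContinuousOn c (Icc t₀ t₁)) (he : ContinuousOn e (Icc t₀ t₁))
    (hu : ∀ t ∈ Icc t₀ t₁, HasDerivAt u (a t * u t + b t * v t) t)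
    (hv : ∀ t ∈ Icc t₀ t₁, HasDerivAt v (c t * u t + e t * v t) t)
    (hu₀ : u t₀ = 0) (hv₀ : v t₀ = 0) :
    ∀ t ∈ Icc t₀ t₁, u t = 0 ∧ v t = 0 := by
  have hcont : ContinuousOn (fun t => (u t, v t)) (Icc t₀ t₁) := fun t ht =>
    ((hu t ht).continuousAt.prodMk (hv t ht).continuousAt).continuousWithinAt
  have hk : ContinuousOn (fun t => |a t| + |b t| + (|c t| + |e t|)) (Icc t₀ t₁) :=
    (ha.abs.add hb.abs).add (hc.abs.add he.abs)
  have bound : ∀ t ∈ Ico t₀ t₁, ‖(a t * u t + b t * v t, c t * u t + e t * v t)‖ ≤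
      (|a t| + |b t| + (|c t| + |e t|)) * ‖(u t, v t)‖ := fun t _ => by
    simp only [Prod.norm_def, Real.norm_eq_abs]
    have hu_le := le_max_left |u t| |v t|
    have hv_le := le_max_right |u t| |v t|
    refine max_le ((abs_mul_add_mul_le hu_le hv_le).trans ?_)
      ((abs_mul_add_mul_le hu_le hv_le).trans ?_)
    · exact mul_le_mul_of_nonneg_right (by linarith [abs_nonneg (c t), abs_nonneg (e t)])
        (by positivity)
    · exact mul_le_mul_of_nonneg_right (by linarith [abs_nonneg (a t), abs_nonneg (b t)])
        (by positivity)
  intro t ht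
  exact Prod.ext_iff.mp <| eq_zero_of_norm_deriv_le_mul_norm_of_continuousOn hk hcont
    (fun t ht => ((hu t (Ico_subset_Icc_self ht)).prodMk
      (hv t (Ico_subset_Icc_self ht))).hasDerivWithinAt)
    (by simp [hu₀, hv₀]) bound t ht

theorem sis_total_population_zero_iff_general
    (r d γ β δ1 δ2 p S I : ℝ → ℝ)
    (hrc : Continuous r) (hdc : Continuous d) (hγc : Continuous γ) (hβc : Continuous β)
    (hδ1c : Continuous δ1) (hδ2c : Continuous δ2) (hpc : Continuous p)
    (hppos : ∀ t : ℝ, 0 ≤ t → 0 < p t)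
    (hS : ∀ t : ℝ, 0 ≤ t →
      HasDerivAt S (r t * (1 - (δ1 t * S t + δ2 t * I t) / p t) * S t
        + (γ t - β t * S t) * I t) t)
    (hI : ∀ t : ℝ, 0 ≤ t → HasDerivAt I ((β t * S t - d t - γ t) * I t) t)
    (hS0 : 0 ≤ S 0) (hI0 : 0 ≤ I 0) :
    (S 0 + I 0 = 0 ↔ ∀ t : ℝ, 0 ≤ t → S t = 0 ∧ I t = 0) ∧
    (S 0 + I 0 = 0 ↔ ∀ t : ℝ, 0 ≤ t → S t + I t = 0) := by
  have hSc : ContinuousOn S (Ici 0) := fun t ht => (hS t ht).continuousAt.continuousWithinAt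
  have hIc : ContinuousOn I (Ici 0) := fun t ht => (hI t ht).continuousAt.continuousWithinAt
  have extinction (h : S 0 + I 0 = 0) (T : ℝ) (hT : 0 ≤ T) : S T = 0 ∧ I T = 0 := by
    have sub : Icc 0 T ⊆ Ici 0 := Icc_subset_Ici_self
    refine eq_zero_of_hasDerivAt_planar_linear (c := 0)
      (hrc.continuousOn.mul (continuousOn_const.sub
        ((((hδ1c.continuousOn.mul hSc).add (hδ2c.continuousOn.mul hIc)).mono sub).div
          hpc.continuousOn fun t ht => (hppos t ht.1).ne')))
      ((hγc.continuousOn.sub (hβc.continuousOn.mul hSc)).mono sub) continuousOn_const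
      ((((hβc.continuousOn.mul hSc).sub hdc.continuousOn).sub hγc.continuousOn).mono sub)
      (fun t ht => hS t ht.1) (fun t ht => by simpa using hI t ht.1)
      (by linarith) (by linarith) T ⟨hT, le_rfl⟩
  refine ⟨⟨extinction, fun h => ?_⟩, ⟨fun h t ht => ?_, fun h => h 0 le_rfl⟩⟩
  · simp [(h 0 le_rfl).1, (h 0 le_rfl).2]
  · simp [(extinction h t ht).1, (extinction h t ht).2]

/-- In the SIS epidemic model with `γ ≥ 0`, `S(0) ≥ 0`, `I(0) ≥ 0`, the following are
equivalent: (a) `N(0) = 0`; (b) `S(t) = 0` and `I(t) = 0` for all `t ≥ 0`;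
(c) `N(t) = 0` for all `t ≥ 0`, where `N = S + I` is the total population. -/
theorem sis_total_population_zero_iff
    (r d γ β δ1 δ2 p S I : ℝ → ℝ)
    (hrc : Continuous r) (hdc : Continuous d) (hγc : Continuous γ) (hβc : Continuous β)
    (hδ1c : Continuous δ1) (hδ2c : Continuous δ2) (hpc : Continuous p)
    (hppos : ∀ t : ℝ, 0 ≤ t → 0 < p t)
    (hS : ∀ t : ℝ, 0 ≤ t →
      HasDerivAt S (r t * (1 - (δ1 t * S t + δ2 t * I t) / p t) * S t
        + (γ t - β t * S t) * I t) t)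
    (hI : ∀ t : ℝ, 0 ≤ t → HasDerivAt I ((β t * S t - d t - γ t) * I t) t)
    (hγpos : ∀ t : ℝ, 0 ≤ t → 0 ≤ γ t)
    (hS0 : 0 ≤ S 0) (hI0 : 0 ≤ I 0) :
    (S 0 + I 0 = 0 ↔ ∀ t : ℝ, 0 ≤ t → S t = 0 ∧ I t = 0) ∧
    (S 0 + I 0 = 0 ↔ ∀ t : ℝ, 0 ≤ t → S t + I t = 0) :=
  sis_total_population_zero_iff_general r d γ β δ1 δ2 p S I hrc hdc hγc hβc hδ1c hδ2c hpc hppos hS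
    hI hS0 hI0
end

section
/- (Boundedness of the populations.) Assume S(0) ≥ 0, I(0) ≥ 0, γ(t) ≥ 0 and δ₂(t) ≥ 0 for all t ≥ 0, and that there exist constants δ_{m1} > 0, d_m > 0, r_M > 0 and p_M > 0 such that δ₁(t) ≥ δ_{m1}, d(t) ≥ d_m, 0 < r(t) ≤ r_M and 0 < p(t) ≤ p_M for all t ≥ 0. Then the susceptible, infected and total populations are bounded: there exists M < ∞ with 0 ≤ S(t) ≤ M, 0 ≤ I(t) ≤ M and 0 ≤ N(t) ≤ M for all t ≥ 0. -/
/-!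
`I' = (βS - d - γ) I` and `S' = (r (1 - G/p) - βI) S + γI` are linear equations `x' = g x + q`
with `q ≥ 0`, so an integrating factor keeps `S` and `I` nonnegative. Then
`N' = r (1 - G/p) S - d I ≤ r (1 - δ_{m1} S / p_M) S - d_m I`. The logistic term is at most
`r_M p_M / (4 δ_{m1})`, and nonpositive once `S ≥ p_M / δ_{m1}`, so `N' ≤ 0` whenever
`N ≥ p_M / δ_{m1} + r_M p_M / (4 δ_{m1} d_m)`; hence `N` never exceeds the larger of `N(0)` and
this threshold.
-/

open Set Filter Topology

theorem nonneg_of_hasDerivAt_eq_mul_add_s9 {f g q : ℝ → ℝ} (hg : ContinuousOn g (Ici 0))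
    (hf : ∀ t, 0 ≤ t → HasDerivAt f (g t * f t + q t) t) (hq : ∀ t, 0 ≤ t → 0 ≤ q t)
    (hf0 : 0 ≤ f 0) {t : ℝ} (ht : 0 ≤ t) : 0 ≤ f t := by
  -- `g (max x 0)` is a continuous extension of `g`, so `G` is a primitive of `g` on `[0, ∞)`.
  set G : ℝ → ℝ := fun u => ∫ x in (0 : ℝ)..u, g (max x 0)
  have hG : ∀ s, 0 ≤ s → HasDerivAt G (g s) s := fun s hs => by
    simpa [max_eq_left hs] using ((hg.comp_continuous (continuous_id.max continuous_const)
      fun x => le_max_right x 0).integral_hasStrictDerivAt 0 s).hasDerivAt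
  have hderiv : ∀ s, 0 ≤ s →
      HasDerivAt (fun u => f u * Real.exp (-G u)) (q s * Real.exp (-G s)) s := fun s hs =>
    ((hf s hs).mul (hG s hs).neg.exp).congr_deriv (by simp only [Pi.neg_apply]; ring)
  have hmono : MonotoneOn (fun u => f u * Real.exp (-G u)) (Ici 0) := by
    refine monotoneOn_of_hasDerivWithinAt_nonneg (convex_Ici 0)
      (fun s hs => (hderiv s hs).continuousAt.continuousWithinAt)
      (fun s hs => (hderiv s (interior_subset hs)).hasDerivWithinAt)
      (fun s hs => mul_nonneg (hq s (interior_subset hs)) (Real.exp_pos _).le)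
  have := hmono self_mem_Ici ht ht
  simp only [G, intervalIntegral.integral_same, neg_zero, Real.exp_zero, mul_one] at this
  exact nonneg_of_mul_nonneg_left (hf0.trans this) (Real.exp_pos _)

theorem le_max_of_hasDerivAt_nonpos_of_le {f f' : ℝ → ℝ} {a K : ℝ}
    (hf : ∀ t, a ≤ t → HasDerivAt f (f' t) t) (hK : ∀ t, a ≤ t → K ≤ f t → f' t ≤ 0)
    {t : ℝ} (ht : a ≤ t) : f t ≤ max (f a) K := by
  set C := max (f a) K
  -- The fencing theorem wants a strict inequality on the boundary, hence the tilted barriers.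
  have barrier : ∀ ε > 0, f t ≤ C + ε * (t - a) := fun ε hε =>
    image_le_of_deriv_right_lt_deriv_boundary
      (fun x hx => (hf x hx.1).continuousAt.continuousWithinAt)
      (fun x hx => (hf x hx.1).hasDerivWithinAt) (B := fun x => C + ε * (x - a))
      (by simp [C]) (fun x => (((hasDerivAt_id x).sub_const a).const_mul ε).const_add C)
      (fun x hx hfx => by
        have : K ≤ f x := by
          rw [hfx]; nlinarith [le_max_right (f a) K, hx.1]
        simpa using (hK x hx.1 this).trans_lt hε)
      ⟨ht, le_rfl⟩
  have hlim : Tendsto (fun ε => C + ε * (t - a)) (𝓝[>] 0) (𝓝 C) := by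
    have : Continuous (fun ε : ℝ => C + ε * (t - a)) := by fun_prop
    simpa using (this.tendsto 0).mono_left nhdsWithin_le_nhds
  exact ge_of_tendsto hlim (eventually_nhdsWithin_of_forall barrier)

theorem mul_one_sub_div_mul_le {r rM δ P S : ℝ} (hr0 : 0 ≤ r) (hr : r ≤ rM) (hδ : 0 < δ)
    (hP : 0 < P) : r * (1 - δ * S / P) * S ≤ rM * P / (4 * δ) := by
  have hquad : (1 - δ * S / P) * S ≤ P / (4 * δ) := by
    have : P / (4 * δ) - (1 - δ * S / P) * S = δ / P * (S - P / (2 * δ)) ^ 2 := by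
      field_simp; ring
    nlinarith [div_nonneg hδ.le hP.le, sq_nonneg (S - P / (2 * δ))]
  have hbound : 0 ≤ P / (4 * δ) := by positivity
  rw [mul_assoc, mul_div_assoc rM]
  rcases le_or_gt ((1 - δ * S / P) * S) 0 with hneg | hpos
  · exact (mul_nonpos_of_nonneg_of_nonpos hr0 hneg).trans (mul_nonneg (hr0.trans hr) hbound)
  · exact mul_le_mul hr hquad hpos.le (hr0.trans hr)

theorem mul_one_sub_div_mul_nonpos {r δ P S : ℝ} (hr0 : 0 ≤ r) (hδ : 0 < δ) (hP : 0 < P)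
    (hS : P / δ ≤ S) : r * (1 - δ * S / P) * S ≤ 0 := by
  have hS0 : 0 ≤ S := (div_pos hP hδ).le.trans hS
  have : 1 ≤ δ * S / P := by
    rw [le_div_iff₀ hP, one_mul]; rwa [div_le_iff₀' hδ] at hS
  exact mul_nonpos_of_nonpos_of_nonneg (mul_nonpos_of_nonneg_of_nonpos hr0 (by linarith)) hS0

theorem mul_div_le_mul_add_mul_div {S I δ1 δ2 p δm1 pM : ℝ} (hS : 0 ≤ S) (hI : 0 ≤ I)
    (hδm1 : 0 ≤ δm1) (hδ1 : δm1 ≤ δ1) (hδ2 : 0 ≤ δ2) (hp0 : 0 < p) (hp : p ≤ pM) :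
    δm1 * S / pM ≤ (δ1 * S + δ2 * I) / p :=
  calc δm1 * S / pM ≤ δm1 * S / p := div_le_div_of_nonneg_left (by positivity) hp0 hp
    _ ≤ (δ1 * S + δ2 * I) / p := by gcongr; nlinarith [mul_nonneg hδ2 hI]

theorem sis_total_growth_nonpos {S I r d δ1 δ2 p δm1 dm rM pM : ℝ} (hS : 0 ≤ S) (hI : 0 ≤ I)
    (hδm1 : 0 < δm1) (hdm : 0 < dm) (hpM : 0 < pM) (hδ1 : δm1 ≤ δ1) (hδ2 : 0 ≤ δ2)
    (hd : dm ≤ d) (hr0 : 0 ≤ r) (hr : r ≤ rM) (hp0 : 0 < p) (hp : p ≤ pM)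
    (hN : pM / δm1 + rM * pM / (4 * δm1) / dm ≤ S + I) :
    r * (1 - (δ1 * S + δ2 * I) / p) * S - d * I ≤ 0 := by
  have hcrowd : r * (1 - (δ1 * S + δ2 * I) / p) * S ≤ r * (1 - δm1 * S / pM) * S := by
    gcongr r * (1 - ?_) * S; exact mul_div_le_mul_add_mul_div hS hI hδm1.le hδ1 hδ2 hp0 hp
  have hdI : dm * I ≤ d * I := mul_le_mul_of_nonneg_right hd hI
  rcases le_or_gt (pM / δm1) S with hlarge | hsmall
  · nlinarith [mul_one_sub_div_mul_nonpos hr0 hδm1 hpM hlarge]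
  · have : rM * pM / (4 * δm1) ≤ dm * I := by
      rw [← div_le_iff₀' hdm]; linarith
    linarith [mul_one_sub_div_mul_le (S := S) hr0 hr hδm1 hpM]

theorem sis_populations_bounded_general
    (r d γ β δ1 δ2 p S I : ℝ → ℝ)
    (hrc : Continuous r) (hdc : Continuous d) (hγc : Continuous γ) (hβc : Continuous β)
    (hδ1c : Continuous δ1) (hδ2c : Continuous δ2) (hpc : Continuous p)
    (hppos : ∀ t : ℝ, 0 ≤ t → 0 < p t)
    (hS : ∀ t : ℝ, 0 ≤ t →
      HasDerivAt S (r t * (1 - (δ1 t * S t + δ2 t * I t) / p t) * S t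
        + (γ t - β t * S t) * I t) t)
    (hI : ∀ t : ℝ, 0 ≤ t → HasDerivAt I ((β t * S t - d t - γ t) * I t) t)
    (hS0 : 0 ≤ S 0) (hI0 : 0 ≤ I 0)
    (hγpos : ∀ t : ℝ, 0 ≤ t → 0 ≤ γ t) (hδ2pos : ∀ t : ℝ, 0 ≤ t → 0 ≤ δ2 t)
    (δm1 dm rM pM : ℝ) (hδm1 : 0 < δm1) (hdm : 0 < dm) (hpM : 0 < pM)
    (hδ1 : ∀ t : ℝ, 0 ≤ t → δm1 ≤ δ1 t)
    (hd : ∀ t : ℝ, 0 ≤ t → dm ≤ d t)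
    (hr : ∀ t : ℝ, 0 ≤ t → 0 < r t ∧ r t ≤ rM)
    (hp : ∀ t : ℝ, 0 ≤ t → p t ≤ pM) :
    ∃ M : ℝ, ∀ t : ℝ, 0 ≤ t →
      0 ≤ S t ∧ S t ≤ M ∧ 0 ≤ I t ∧ I t ≤ M ∧ 0 ≤ S t + I t ∧ S t + I t ≤ M := by
  have hScont : ContinuousOn S (Ici 0) := fun t ht => (hS t ht).continuousAt.continuousWithinAt
  have hIcont : ContinuousOn I (Ici 0) := fun t ht => (hI t ht).continuousAt.continuousWithinAt
  have hInn : ∀ t, 0 ≤ t → 0 ≤ I t := fun t ht =>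
    nonneg_of_hasDerivAt_eq_mul_add_s9 (g := fun t => β t * S t - d t - γ t) (q := 0)
      (by fun_prop) (fun t ht => by simpa using hI t ht) (fun _ _ => le_rfl) hI0 ht
  have hSnn : ∀ t, 0 ≤ t → 0 ≤ S t := fun t ht =>
    nonneg_of_hasDerivAt_eq_mul_add_s9
      (g := fun t => r t * (1 - (δ1 t * S t + δ2 t * I t) / p t) - β t * I t)
      (q := fun t => γ t * I t)
      (by fun_prop (disch := exact fun t ht => (hppos t ht).ne'))
      (fun t ht => (hS t ht).congr_deriv (by ring))
      (fun t ht => mul_nonneg (hγpos t ht) (hInn t ht)) hS0 ht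
  set K := pM / δm1 + rM * pM / (4 * δm1) / dm
  have hN : ∀ t, 0 ≤ t → S t + I t ≤ max (S 0 + I 0) K := fun t ht =>
    le_max_of_hasDerivAt_nonpos_of_le (f := fun u => S u + I u)
      (fun s hs => (hS s hs).add (hI s hs))
      (fun s hs hKs => by
        linarith [sis_total_growth_nonpos (hSnn s hs) (hInn s hs) hδm1 hdm hpM (hδ1 s hs)
          (hδ2pos s hs) (hd s hs) (hr s hs).1.le (hr s hs).2 (hppos s hs) (hp s hs) hKs])
      ht
  refine ⟨max (S 0 + I 0) K, fun t ht => ?_⟩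
  have hSt := hSnn t ht
  have hIt := hInn t ht
  have hNt := hN t ht
  exact ⟨hSt, by linarith, hIt, by linarith, by linarith, hNt⟩

/-- Boundedness of the populations of the SIS model: if `S(0), I(0) ≥ 0`,
`γ, δ₂ ≥ 0`, and there are constants `δ_{m1} > 0`, `d_m > 0`, `r_M > 0`, `p_M > 0`
with `δ₁ ≥ δ_{m1}`, `d ≥ d_m`, `0 < r ≤ r_M` and `0 < p ≤ p_M` on `[0, ∞)`, then
the susceptible, infected and total populations are bounded on `[0, ∞)`. -/
theorem sis_populations_bounded
    (r d γ β δ1 δ2 p S I : ℝ → ℝ)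
    (hrc : Continuous r) (hdc : Continuous d) (hγc : Continuous γ) (hβc : Continuous β)
    (hδ1c : Continuous δ1) (hδ2c : Continuous δ2) (hpc : Continuous p)
    (hppos : ∀ t : ℝ, 0 ≤ t → 0 < p t)
    (hS : ∀ t : ℝ, 0 ≤ t →
      HasDerivAt S (r t * (1 - (δ1 t * S t + δ2 t * I t) / p t) * S t
        + (γ t - β t * S t) * I t) t)
    (hI : ∀ t : ℝ, 0 ≤ t → HasDerivAt I ((β t * S t - d t - γ t) * I t) t)
    (hS0 : 0 ≤ S 0) (hI0 : 0 ≤ I 0)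
    (hγpos : ∀ t : ℝ, 0 ≤ t → 0 ≤ γ t) (hδ2pos : ∀ t : ℝ, 0 ≤ t → 0 ≤ δ2 t)
    (δm1 dm rM pM : ℝ) (hδm1 : 0 < δm1) (hdm : 0 < dm) (hrM : 0 < rM) (hpM : 0 < pM)
    (hδ1 : ∀ t : ℝ, 0 ≤ t → δm1 ≤ δ1 t)
    (hd : ∀ t : ℝ, 0 ≤ t → dm ≤ d t)
    (hr : ∀ t : ℝ, 0 ≤ t → 0 < r t ∧ r t ≤ rM)
    (hp : ∀ t : ℝ, 0 ≤ t → p t ≤ pM) :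
    ∃ M : ℝ, ∀ t : ℝ, 0 ≤ t →
      0 ≤ S t ∧ S t ≤ M ∧ 0 ≤ I t ∧ I t ≤ M ∧ 0 ≤ S t + I t ∧ S t + I t ≤ M :=
  sis_populations_bounded_general r d γ β δ1 δ2 p S I hrc hdc hγc hβc hδ1c hδ2c hpc hppos hS hI hS0
    hI0 hγpos hδ2pos δm1 dm rM pM hδm1 hdm hpM hδ1 hd hr hp
end

section
/- Assume S(0) ≥ 0, I(0) ≥ 0 and γ(t) ≥ 0 for all t ≥ 0. Suppose that ∫₀ᵗ r(τ)·(1 − G(τ)/p(τ)) dτ → −∞ as t → +∞ and that there exists t₁ ≥ 0 such that d(t) + r(t)·(1 − G(t)/p(t)) ≥ 0 for all t ≥ t₁. Then N(t) → 0, S(t) → 0 and I(t) → 0 as t → +∞. -/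
open Set Filter MeasureTheory intervalIntegral

lemma exp_bound_aux (f f' c : ℝ → ℝ) (a b : ℝ) (hab : a ≤ b) (ha : 0 ≤ a)
    (hc : ContinuousOn c (Set.Ici 0))
    (hfc : ContinuousOn f (Set.Icc a b))
    (hf : ∀ t ∈ Set.Ioo a b, HasDerivAt f (f' t) t)
    (hle : ∀ t ∈ Set.Ioo a b, f' t ≤ c t * f t) :
    f b ≤ f a * Real.exp (∫ τ in a..b, c τ) := by
  have hsub : Set.uIcc a b ⊆ Set.Ici 0 := by
    rw [Set.uIcc_of_le hab]
    exact fun x hx => le_trans ha hx.1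
  have hci : IntervalIntegrable c volume a b := (hc.mono hsub).intervalIntegrable
  set C : ℝ → ℝ := fun t => ∫ τ in a..t, c τ with hC
  have hCc : ContinuousOn C (Set.Icc a b) := by
    have := continuousOn_primitive_interval' hci (left_mem_uIcc (a := a) (b := b))
    rwa [Set.uIcc_of_le hab] at this
  have hCd : ∀ t ∈ Set.Ioo a b, HasDerivAt C (c t) t := by
    intro t ht
    have hmem : Set.Ici (0:ℝ) ∈ nhds t :=
      Ici_mem_nhds (lt_of_le_of_lt ha ht.1)
    have hct : ContinuousAt c t := hc.continuousAt hmem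
    have hint : IntervalIntegrable c volume a t := by
      apply (hc.mono _).intervalIntegrable
      rw [Set.uIcc_of_le ht.1.le]
      exact fun x hx => le_trans ha hx.1
    exact integral_hasDerivAt_right hint
      ⟨Set.Ici 0, hmem, (hc.mono Set.Subset.rfl).aestronglyMeasurable measurableSet_Ici⟩ hct
  set u : ℝ → ℝ := fun t => f t * Real.exp (-C t) with hu
  have huc : ContinuousOn u (Set.Icc a b) :=
    hfc.mul (Real.continuous_exp.comp_continuousOn hCc.neg)
  have hud : ∀ t ∈ Set.Ioo a b, HasDerivAt u
      (f' t * Real.exp (-C t) + f t * (Real.exp (-C t) * (-(c t)))) t := by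
    intro t ht
    exact (hf t ht).mul (((hCd t ht).neg).exp)
  have hanti : AntitoneOn u (Set.Icc a b) := by
    apply antitoneOn_of_hasDerivWithinAt_nonpos (convex_Icc a b) huc
    · intro x hx
      rw [interior_Icc] at hx
      exact ((hud x hx).hasDerivWithinAt)
    · intro x hx
      rw [interior_Icc] at hx
      have h1 := hle x hx
      have h2 : (0:ℝ) < Real.exp (-C x) := Real.exp_pos _
      nlinarith
  have hub : u b ≤ u a :=
    hanti (Set.left_mem_Icc.2 hab) (Set.right_mem_Icc.2 hab) hab
  have hCa : C a = 0 := intervalIntegral.integral_same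
  have hua : u a = f a := by simp [hu, hCa]
  rw [hua] at hub
  have : f b * Real.exp (-C b) ≤ f a := hub
  rw [Real.exp_neg, ← div_eq_mul_inv] at this
  calc f b ≤ f a * Real.exp (C b) := (div_le_iff₀ (Real.exp_pos _)).1 this
    _ = _ := rfl

lemma exp_bound_aux' (f f' c : ℝ → ℝ) (a b : ℝ) (hab : a ≤ b) (ha : 0 ≤ a)
    (hc : ContinuousOn c (Set.Ici 0))
    (hfc : ContinuousOn f (Set.Icc a b))
    (hf : ∀ t ∈ Set.Ioo a b, HasDerivAt f (f' t) t)
    (hle : ∀ t ∈ Set.Ioo a b, c t * f t ≤ f' t) :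
    f a * Real.exp (∫ τ in a..b, c τ) ≤ f b := by
  have h := exp_bound_aux (fun t => -f t) (fun t => -f' t) c a b hab ha hc hfc.neg
    (fun t ht => (hf t ht).neg)
    (fun t ht => by have := hle t ht; simp only [mul_neg]; linarith)
  simp only [neg_mul] at h
  linarith

/-- If `S(0), I(0) ≥ 0`, `γ ≥ 0`, `∫₀ᵗ r (1 - G/p) → -∞` as `t → +∞`, and
`d + r (1 - G/p) ≥ 0` for all large enough `t`, then the total, susceptible and
infected populations all tend to zero as `t → +∞`. -/
theorem sis_all_populations_extinguish
    (r d γ β δ1 δ2 p S I : ℝ → ℝ)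
    (hrc : Continuous r) (hdc : Continuous d) (hγc : Continuous γ) (hβc : Continuous β)
    (hδ1c : Continuous δ1) (hδ2c : Continuous δ2) (hpc : Continuous p)
    (hppos : ∀ t : ℝ, 0 ≤ t → 0 < p t)
    (hS : ∀ t : ℝ, 0 ≤ t →
      HasDerivAt S (r t * (1 - (δ1 t * S t + δ2 t * I t) / p t) * S t
        + (γ t - β t * S t) * I t) t)
    (hI : ∀ t : ℝ, 0 ≤ t → HasDerivAt I ((β t * S t - d t - γ t) * I t) t)
    (hS0 : 0 ≤ S 0) (hI0 : 0 ≤ I 0) (hγpos : ∀ t : ℝ, 0 ≤ t → 0 ≤ γ t)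
    (hint : Filter.Tendsto
      (fun t => ∫ τ in (0:ℝ)..t, r τ * (1 - (δ1 τ * S τ + δ2 τ * I τ) / p τ))
      Filter.atTop Filter.atBot)
    (t₁ : ℝ) (ht₁ : 0 ≤ t₁)
    (hdr : ∀ t : ℝ, t₁ ≤ t →
      0 ≤ d t + r t * (1 - (δ1 t * S t + δ2 t * I t) / p t)) :
    Filter.Tendsto (fun t => S t + I t) Filter.atTop (nhds 0) ∧
    Filter.Tendsto S Filter.atTop (nhds 0) ∧
    Filter.Tendsto I Filter.atTop (nhds 0) := by
  have hScont : ContinuousOn S (Set.Ici 0) :=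
    fun t ht => ((hS t ht).continuousAt).continuousWithinAt
  have hIcont : ContinuousOn I (Set.Ici 0) :=
    fun t ht => ((hI t ht).continuousAt).continuousWithinAt
  have hLc : ContinuousOn (fun t => r t * (1 - (δ1 t * S t + δ2 t * I t) / p t))
      (Set.Ici 0) := by
    apply hrc.continuousOn.mul
    apply continuousOn_const.sub
    exact ((hδ1c.continuousOn.mul hScont).add (hδ2c.continuousOn.mul hIcont)).div
      hpc.continuousOn (fun t ht => (hppos t ht).ne')
  -- I is nonnegative
  have hInn : ∀ t, 0 ≤ t → 0 ≤ I t := by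
    intro t ht
    have hcI : ContinuousOn (fun τ => β τ * S τ - d τ - γ τ) (Set.Ici 0) :=
      ((hβc.continuousOn.mul hScont).sub hdc.continuousOn).sub hγc.continuousOn
    have h := exp_bound_aux' I (fun τ => (β τ * S τ - d τ - γ τ) * I τ)
      (fun τ => β τ * S τ - d τ - γ τ) 0 t ht le_rfl hcI
      (hIcont.mono (fun x hx => hx.1))
      (fun τ hτ => hI τ hτ.1.le)
      (fun τ hτ => le_rfl)
    exact le_trans (mul_nonneg hI0 (Real.exp_pos _).le) h
  -- S is nonnegative
  have hSnn : ∀ t, 0 ≤ t → 0 ≤ S t := by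
    intro t ht
    have hcS : ContinuousOn
        (fun τ => r τ * (1 - (δ1 τ * S τ + δ2 τ * I τ) / p τ) - β τ * I τ)
        (Set.Ici 0) := hLc.sub (hβc.continuousOn.mul hIcont)
    have h := exp_bound_aux' S
      (fun τ => r τ * (1 - (δ1 τ * S τ + δ2 τ * I τ) / p τ) * S τ
        + (γ τ - β τ * S τ) * I τ)
      (fun τ => r τ * (1 - (δ1 τ * S τ + δ2 τ * I τ) / p τ) - β τ * I τ)
      0 t ht le_rfl hcS
      (hScont.mono (fun x hx => hx.1))
      (fun τ hτ => hS τ hτ.1.le)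
      (fun τ hτ => by
        have h1 := hγpos τ hτ.1.le
        have h2 := hInn τ hτ.1.le
        nlinarith [mul_nonneg h1 h2])
    exact le_trans (mul_nonneg hS0 (Real.exp_pos _).le) h
  -- derivative of the total population N = S + I
  have hNd : ∀ t, 0 ≤ t → HasDerivAt (fun t => S t + I t)
      (r t * (1 - (δ1 t * S t + δ2 t * I t) / p t) * S t
        + (γ t - β t * S t) * I t + (β t * S t - d t - γ t) * I t) t :=
    fun t ht => (hS t ht).add (hI t ht)
  have hNcont : ContinuousOn (fun t => S t + I t) (Set.Ici 0) := hScont.add hIcont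
  -- comparison bound for N on [t₁, ∞)
  have hNbound : ∀ t, t₁ ≤ t → S t + I t ≤ (S t₁ + I t₁) *
      Real.exp (∫ τ in t₁..t, r τ * (1 - (δ1 τ * S τ + δ2 τ * I τ) / p τ)) := by
    intro t ht
    apply exp_bound_aux (fun t => S t + I t)
      (fun τ => r τ * (1 - (δ1 τ * S τ + δ2 τ * I τ) / p τ) * S τ
        + (γ τ - β τ * S τ) * I τ + (β τ * S τ - d τ - γ τ) * I τ)
      (fun τ => r τ * (1 - (δ1 τ * S τ + δ2 τ * I τ) / p τ)) t₁ t ht ht₁ hLc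
      (hNcont.mono (fun x hx => le_trans ht₁ hx.1))
      (fun τ hτ => hNd τ (le_trans ht₁ hτ.1.le))
    intro τ hτ
    have h1 := hdr τ hτ.1.le
    have h2 := hInn τ (le_trans ht₁ hτ.1.le)
    nlinarith [mul_nonneg h1 h2]
  -- integrability of the coefficient
  have hLint : ∀ t : ℝ, 0 ≤ t → IntervalIntegrable
      (fun τ => r τ * (1 - (δ1 τ * S τ + δ2 τ * I τ) / p τ)) volume 0 t := by
    intro t ht
    apply (hLc.mono _).intervalIntegrable
    rw [Set.uIcc_of_le ht]
    exact fun x hx => hx.1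
  have hsplit : ∀ t : ℝ, t₁ ≤ t →
      (∫ τ in t₁..t, r τ * (1 - (δ1 τ * S τ + δ2 τ * I τ) / p τ))
        = (∫ τ in (0:ℝ)..t, r τ * (1 - (δ1 τ * S τ + δ2 τ * I τ) / p τ))
          - ∫ τ in (0:ℝ)..t₁, r τ * (1 - (δ1 τ * S τ + δ2 τ * I τ) / p τ) := by
    intro t ht
    rw [intervalIntegral.integral_interval_sub_left (hLint t (le_trans ht₁ ht))
      (hLint t₁ ht₁)]
  -- the bound tends to zero
  have htend : Filter.Tendsto (fun t => (S t₁ + I t₁) *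
      Real.exp ((∫ τ in (0:ℝ)..t, r τ * (1 - (δ1 τ * S τ + δ2 τ * I τ) / p τ))
        - ∫ τ in (0:ℝ)..t₁, r τ * (1 - (δ1 τ * S τ + δ2 τ * I τ) / p τ)))
      Filter.atTop (nhds 0) := by
    have h1 : Filter.Tendsto (fun t =>
        (∫ τ in (0:ℝ)..t, r τ * (1 - (δ1 τ * S τ + δ2 τ * I τ) / p τ))
          - ∫ τ in (0:ℝ)..t₁, r τ * (1 - (δ1 τ * S τ + δ2 τ * I τ) / p τ))
        Filter.atTop Filter.atBot := by
      simp only [sub_eq_add_neg]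
      exact Filter.tendsto_atBot_add_const_right _ _ hint
    have h2 := Real.tendsto_exp_atBot.comp h1
    have h3 := h2.const_mul (S t₁ + I t₁)
    simpa using h3
  have hNtend : Filter.Tendsto (fun t => S t + I t) Filter.atTop (nhds 0) := by
    apply tendsto_of_tendsto_of_tendsto_of_le_of_le' tendsto_const_nhds htend
    · filter_upwards [Filter.eventually_ge_atTop t₁] with t ht
      have h0 : (0:ℝ) ≤ t := le_trans ht₁ ht
      exact add_nonneg (hSnn t h0) (hInn t h0)
    · filter_upwards [Filter.eventually_ge_atTop t₁] with t ht
      rw [← hsplit t ht]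
      exact hNbound t ht
  refine ⟨hNtend, ?_, ?_⟩
  · apply tendsto_of_tendsto_of_tendsto_of_le_of_le' tendsto_const_nhds hNtend
    · filter_upwards [Filter.eventually_ge_atTop (0:ℝ)] with t ht
      exact hSnn t ht
    · filter_upwards [Filter.eventually_ge_atTop (0:ℝ)] with t ht
      exact le_add_of_nonneg_right (hInn t ht)
  · apply tendsto_of_tendsto_of_tendsto_of_le_of_le' tendsto_const_nhds hNtend
    · filter_upwards [Filter.eventually_ge_atTop (0:ℝ)] with t ht
      exact hInn t ht
    · filter_upwards [Filter.eventually_ge_atTop (0:ℝ)] with t ht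
      exact le_add_of_nonneg_left (hSnn t ht)
end

section
/- Assume S(0) ≥ 0, I(0) > 0, γ(t) ≥ 0, δ₁(t) ≥ 0, δ₂(t) ≥ 0 for all t ≥ 0, and that for every t ≥ 0 one has r(t) > 0 and d(t)/r(t) > S(t)/I(t) (equivalently d(t)·I(t) > r(t)·S(t); note I(t) > 0 for all t since I(0) > 0). Then N'(t) < 0 for all t ≥ 0, so the total population N is strictly decreasing on [0,∞) and N(t) ≤ N(0) for all t ≥ 0. -/
/-!
`I` solves the linear equation `I' = (βS - d - γ) I` and `S` solves `S' = c S + γ I` with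
`c` continuous and `γ I ≥ 0`, so multiplying by the integrating factor `exp (-∫ c)` makes `I`
stay positive and `S` stay nonnegative. Then the logistic term `r (G/p) S` is nonnegative,
hence `N' ≤ r S - d I < 0`.
-/

open Set Real

section Calculus

variable {D : Set ℝ} {f f' : ℝ → ℝ}

theorem monotoneOn_of_hasDerivAt_nonneg (hD : Convex ℝ D)
    (hf : ∀ x ∈ D, HasDerivAt f (f' x) x) (hf' : ∀ x ∈ D, 0 ≤ f' x) : MonotoneOn f D :=
  monotoneOn_of_hasDerivWithinAt_nonneg hD
    (fun x hx => (hf x hx).continuousAt.continuousWithinAt)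
    (fun x hx => (hf x (interior_subset hx)).hasDerivWithinAt)
    (fun x hx => hf' x (interior_subset hx))

theorem strictAntiOn_of_hasDerivAt_neg (hD : Convex ℝ D)
    (hf : ∀ x ∈ D, HasDerivAt f (f' x) x) (hf' : ∀ x ∈ D, f' x < 0) : StrictAntiOn f D :=
  strictAntiOn_of_hasDerivWithinAt_neg hD
    (fun x hx => (hf x hx).continuousAt.continuousWithinAt)
    (fun x hx => (hf x (interior_subset hx)).hasDerivWithinAt)
    (fun x hx => hf' x (interior_subset hx))

theorem exists_hasDerivAt_of_continuousOn_Ici {c : ℝ → ℝ} {a : ℝ}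
    (hc : ContinuousOn c (Ici a)) : ∃ A : ℝ → ℝ, ∀ t ∈ Ici a, HasDerivAt A (c t) t := by
  have hc' : Continuous fun t => c (max t a) :=
    hc.comp_continuous (continuous_id.max continuous_const) fun t => le_max_right t a
  refine ⟨fun t => ∫ s in a..t, c (max s a), fun t (ht : a ≤ t) => ?_⟩
  simpa only [max_eq_left ht] using (hc'.integral_hasStrictDerivAt a t).hasDerivAt

end Calculus

section LinearComparison

variable {c b g A : ℝ → ℝ} {D : Set ℝ} {a : ℝ}

theorem monotoneOn_mul_exp_neg_of_hasDerivAt (hD : Convex ℝ D)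
    (hA : ∀ t ∈ D, HasDerivAt A (c t) t) (hg : ∀ t ∈ D, HasDerivAt g (c t * g t + b t) t)
    (hb : ∀ t ∈ D, 0 ≤ b t) : MonotoneOn (fun t => g t * exp (-A t)) D := by
  refine monotoneOn_of_hasDerivAt_nonneg hD (f' := fun t => b t * exp (-A t))
    (fun t ht => ?_) (fun t ht => mul_nonneg (hb t ht) (exp_pos _).le)
  exact ((hg t ht).mul (hA t ht).fun_neg.exp).congr_deriv (by ring)

theorem nonneg_of_hasDerivAt_eq_mul_add_s13 (hc : ContinuousOn c (Ici a))
    (hg : ∀ t ∈ Ici a, HasDerivAt g (c t * g t + b t) t) (hb : ∀ t ∈ Ici a, 0 ≤ b t)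
    (ha : 0 ≤ g a) : ∀ t ∈ Ici a, 0 ≤ g t := by
  obtain ⟨A, hA⟩ := exists_hasDerivAt_of_continuousOn_Ici hc
  intro t ht
  have hmono := monotoneOn_mul_exp_neg_of_hasDerivAt (convex_Ici a) hA hg hb self_mem_Ici ht ht
  exact nonneg_of_mul_nonneg_left ((mul_nonneg ha (exp_pos _).le).trans hmono) (exp_pos _)

theorem pos_of_hasDerivAt_eq_mul (hc : ContinuousOn c (Ici a))
    (hg : ∀ t ∈ Ici a, HasDerivAt g (c t * g t) t) (ha : 0 < g a) : ∀ t ∈ Ici a, 0 < g t := by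
  obtain ⟨A, hA⟩ := exists_hasDerivAt_of_continuousOn_Ici hc
  intro t ht
  have hmono := monotoneOn_mul_exp_neg_of_hasDerivAt (b := 0) (convex_Ici a) hA
    (by simpa only [Pi.zero_apply, add_zero] using hg) (fun _ _ => le_rfl) self_mem_Ici ht ht
  exact pos_of_mul_pos_left ((mul_pos ha (exp_pos _)).trans_le hmono) (exp_pos _).le

end LinearComparison

/-- If `S(0) ≥ 0`, `I(0) > 0`, `γ, δ₁, δ₂ ≥ 0` and for all `t ≥ 0` one has
`r(t) > 0` and `d(t)/r(t) > S(t)/I(t)` (equivalently `d(t)·I(t) > r(t)·S(t)`),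
then `N'(t) = r(t)(1 - G(t)/p(t))S(t) - d(t)I(t) < 0` for all `t ≥ 0`, the total
population `N = S + I` is strictly decreasing on `[0, ∞)` and `N(t) ≤ N(0)`. -/
theorem sis_total_population_strictly_decreasing
    (r d γ β δ1 δ2 p S I : ℝ → ℝ)
    (hrc : Continuous r) (hdc : Continuous d) (hγc : Continuous γ) (hβc : Continuous β)
    (hδ1c : Continuous δ1) (hδ2c : Continuous δ2) (hpc : Continuous p)
    (hppos : ∀ t : ℝ, 0 ≤ t → 0 < p t)
    (hS : ∀ t : ℝ, 0 ≤ t →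
      HasDerivAt S (r t * (1 - (δ1 t * S t + δ2 t * I t) / p t) * S t
        + (γ t - β t * S t) * I t) t)
    (hI : ∀ t : ℝ, 0 ≤ t → HasDerivAt I ((β t * S t - d t - γ t) * I t) t)
    (hS0 : 0 ≤ S 0) (hI0 : 0 < I 0)
    (hγpos : ∀ t : ℝ, 0 ≤ t → 0 ≤ γ t)
    (hδ1pos : ∀ t : ℝ, 0 ≤ t → 0 ≤ δ1 t) (hδ2pos : ∀ t : ℝ, 0 ≤ t → 0 ≤ δ2 t)
    (hr : ∀ t : ℝ, 0 ≤ t → 0 < r t)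
    (hdr : ∀ t : ℝ, 0 ≤ t → r t * S t < d t * I t) :
    (∀ t : ℝ, 0 ≤ t →
      r t * (1 - (δ1 t * S t + δ2 t * I t) / p t) * S t - d t * I t < 0) ∧
    StrictAntiOn (fun t => S t + I t) (Set.Ici (0:ℝ)) ∧
    (∀ t : ℝ, 0 ≤ t → S t + I t ≤ S 0 + I 0) := by
  have hSc : ContinuousOn S (Ici 0) :=
    continuousOn_of_forall_continuousAt fun t ht => (hS t ht).continuousAt
  have hIc : ContinuousOn I (Ici 0) :=
    continuousOn_of_forall_continuousAt fun t ht => (hI t ht).continuousAt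
  have hIpos : ∀ t ∈ Ici 0, 0 < I t :=
    pos_of_hasDerivAt_eq_mul (by fun_prop) hI hI0
  have hSnn : ∀ t ∈ Ici 0, 0 ≤ S t := by
    refine nonneg_of_hasDerivAt_eq_mul_add_s13
      (c := fun t => r t * (1 - (δ1 t * S t + δ2 t * I t) / p t) - β t * I t)
      (b := fun t => γ t * I t) ?_ (fun t ht => (hS t ht).congr_deriv (by ring))
      (fun t ht => mul_nonneg (hγpos t ht) (hIpos t ht).le) hS0
    exact (hrc.continuousOn.mul (continuousOn_const.sub
      (((hδ1c.continuousOn.mul hSc).add (hδ2c.continuousOn.mul hIc)).div hpc.continuousOn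
        fun t ht => (hppos t ht).ne'))).sub (hβc.continuousOn.mul hIc)
  have hN' : ∀ t : ℝ, 0 ≤ t →
      r t * (1 - (δ1 t * S t + δ2 t * I t) / p t) * S t - d t * I t < 0 := by
    intro t ht
    have hG : 0 ≤ (δ1 t * S t + δ2 t * I t) / p t :=
      div_nonneg (add_nonneg (mul_nonneg (hδ1pos t ht) (hSnn t ht))
        (mul_nonneg (hδ2pos t ht) (hIpos t ht).le)) (hppos t ht).le
    have hlogistic := mul_nonneg (mul_nonneg (hr t ht).le hG) (hSnn t ht)
    linarith [hdr t ht]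
  have hanti : StrictAntiOn (fun t => S t + I t) (Ici 0) :=
    strictAntiOn_of_hasDerivAt_neg (convex_Ici 0)
      (fun t ht => ((hS t ht).add (hI t ht)).congr_deriv (by ring)) hN'
  exact ⟨hN', hanti, fun t ht => hanti.antitoneOn self_mem_Ici ht ht⟩
end

section
/- Assume I(0) > 0, S(0) ≥ 0 and γ(t) ≥ 0 for all t ≥ 0. If liminf_{t→∞} (β(t)·S(t) − d(t) − γ(t)) > 0, then the infected and the total populations are unbounded: I(t) → +∞ and N(t) → +∞ as t → +∞. -/
/-! `I' = (βS - d - γ) I` is linear in `I`, so the integrating factor `exp (-∫ (βS - d - γ))`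
keeps `I` positive; then `I' ≥ ε I` from some time on forces exponential growth. The `S`-equation
is linear in `S` with the forcing term `γ I ≥ 0`, so the same integrating factor argument keeps
`S` nonnegative, and `N = S + I ≥ I`. -/

open Set Filter Real

theorem mul_exp_integral_le_of_hasDerivAt {a f f' : ℝ → ℝ} {x₀ t : ℝ}
    (ha : ContinuousOn a (Ici x₀)) (hf : ∀ s, x₀ ≤ s → HasDerivAt f (f' s) s)
    (hf' : ∀ s, x₀ ≤ s → a s * f s ≤ f' s) (ht : x₀ ≤ t) :
    f x₀ * exp (∫ s in x₀..t, a s) ≤ f t := by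
  -- `a` extended to the left of `x₀` by its value there, so that its primitive is differentiable
  set ā : ℝ → ℝ := fun s => a (max x₀ s)
  have hā : Continuous ā := ha.comp_continuous (continuous_const.max continuous_id) fun s =>
    le_max_left x₀ s
  have hāa : ∀ s, x₀ ≤ s → ā s = a s := fun s hs => by simp [ā, max_eq_right hs]
  set b : ℝ → ℝ := fun u => ∫ s in x₀..u, ā s
  set g : ℝ → ℝ := fun u => f u * exp (-b u)
  have hg : ∀ u, x₀ ≤ u → HasDerivAt g ((f' u - a u * f u) * exp (-b u)) u := fun u hu => by
    have hb : HasDerivAt b (ā u) u := (hā.integral_hasStrictDerivAt x₀ u).hasDerivAt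
    refine ((hf u hu).mul hb.neg.exp).congr_deriv ?_
    rw [hāa u hu, Pi.neg_apply]
    ring
  have hg_mono : MonotoneOn g (Ici x₀) :=
    monotoneOn_of_hasDerivWithinAt_nonneg (convex_Ici x₀)
      (fun u hu => (hg u hu).continuousAt.continuousWithinAt)
      (fun u hu => (hg u (interior_subset hu)).hasDerivWithinAt)
      (fun u hu => mul_nonneg (sub_nonneg.2 (hf' u (interior_subset hu))) (exp_pos _).le)
  have hbt : b t = ∫ s in x₀..t, a s := intervalIntegral.integral_congr fun s hs =>
    hāa s (by rw [uIcc_of_le ht] at hs; exact hs.1)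
  have hgt : f x₀ ≤ f t * exp (-b t) := by
    simpa [g, b] using hg_mono self_mem_Ici ht ht
  calc f x₀ * exp (∫ s in x₀..t, a s)
      ≤ f t * exp (-b t) * exp (b t) := by
        rw [← hbt]; exact mul_le_mul_of_nonneg_right hgt (exp_pos _).le
    _ = f t := by rw [mul_assoc, ← exp_add, neg_add_cancel, exp_zero, mul_one]

theorem tendsto_atTop_of_hasDerivAt_of_mul_le {f f' : ℝ → ℝ} {x₀ ε : ℝ} (hε : 0 < ε)
    (hf₀ : 0 < f x₀) (hf : ∀ s, x₀ ≤ s → HasDerivAt f (f' s) s)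
    (hf' : ∀ s, x₀ ≤ s → ε * f s ≤ f' s) :
    Tendsto f atTop atTop := by
  have hgrowth : ∀ t, x₀ ≤ t → f x₀ * exp ((t - x₀) * ε) ≤ f t := fun t ht => by
    simpa using mul_exp_integral_le_of_hasDerivAt continuousOn_const hf hf' ht
  refine tendsto_atTop_mono' atTop ((eventually_ge_atTop x₀).mono hgrowth) ?_
  refine (tendsto_exp_atTop.comp ?_).const_mul_atTop hf₀
  exact (tendsto_atTop_add_const_right atTop (-x₀) tendsto_id).atTop_mul_const hε

/-- If `I(0) > 0`, `S(0) ≥ 0`, `γ ≥ 0` and `liminf_{t→∞} (β S - d - γ) > 0`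
(encoded: eventually `β S - d - γ ≥ ε` for some `ε > 0`), then the infected and
the total populations are unbounded: `I(t) → +∞` and `N(t) → +∞`. -/
theorem sis_infected_and_total_unbounded
    (r d γ β δ1 δ2 p S I : ℝ → ℝ)
    (hrc : Continuous r) (hdc : Continuous d) (hγc : Continuous γ) (hβc : Continuous β)
    (hδ1c : Continuous δ1) (hδ2c : Continuous δ2) (hpc : Continuous p)
    (hppos : ∀ t : ℝ, 0 ≤ t → 0 < p t)
    (hS : ∀ t : ℝ, 0 ≤ t →
      HasDerivAt S (r t * (1 - (δ1 t * S t + δ2 t * I t) / p t) * S t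
        + (γ t - β t * S t) * I t) t)
    (hI : ∀ t : ℝ, 0 ≤ t → HasDerivAt I ((β t * S t - d t - γ t) * I t) t)
    (hI0 : 0 < I 0) (hS0 : 0 ≤ S 0) (hγpos : ∀ t : ℝ, 0 ≤ t → 0 ≤ γ t)
    (hliminf : ∃ ε : ℝ, 0 < ε ∧ ∃ T : ℝ, 0 ≤ T ∧
      ∀ t : ℝ, T ≤ t → ε ≤ β t * S t - d t - γ t) :
    Filter.Tendsto I Filter.atTop Filter.atTop ∧
    Filter.Tendsto (fun t => S t + I t) Filter.atTop Filter.atTop := by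
  obtain ⟨ε, hε, T, hT, hrate⟩ := hliminf
  have hSc : ContinuousOn S (Ici 0) := fun t ht => (hS t ht).continuousAt.continuousWithinAt
  have hIc : ContinuousOn I (Ici 0) := fun t ht => (hI t ht).continuousAt.continuousWithinAt
  have hIpos : ∀ t, 0 ≤ t → 0 < I t := fun t ht =>
    (mul_pos hI0 (exp_pos _)).trans_le <| mul_exp_integral_le_of_hasDerivAt
      (a := fun t => β t * S t - d t - γ t) (by fun_prop) hI (fun s _ => le_rfl) ht
  have hSnn : ∀ t, 0 ≤ t → 0 ≤ S t := fun t ht =>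
    (mul_nonneg hS0 (exp_pos _).le).trans <| mul_exp_integral_le_of_hasDerivAt
      (a := fun t => r t * (1 - (δ1 t * S t + δ2 t * I t) / p t) - β t * I t)
      (by fun_prop (disch := exact fun t ht => (hppos t ht).ne')) hS
      (fun s hs => by linarith [mul_nonneg (hγpos s hs) (hIpos s hs).le]) ht
  have hItop : Tendsto I atTop atTop :=
    tendsto_atTop_of_hasDerivAt_of_mul_le hε (hIpos T hT) (fun s hs => hI s (hT.trans hs))
      fun s hs => mul_le_mul_of_nonneg_right (hrate s hs) (hIpos s (hT.trans hs)).le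
  exact ⟨hItop, tendsto_atTop_mono' atTop ((eventually_ge_atTop 0).mono fun t ht =>
    le_add_of_nonneg_left (hSnn t ht)) hItop⟩
end

section
/- (Persistence and boundedness of the infection-free population.) Assume I(0) = 0 (so I(t) = 0 and N(t) = S(t) for all t ≥ 0, and N'(t) = r(t)·(1 − δ₁(t)·N(t)/p(t))·N(t)), that N(0) > 0, that r(t) > 0 for all t ≥ 0, and that there are constants 0 < δ_{1m} ≤ δ_{1M} and 0 < ε₀ ≤ p_M with δ_{1m} ≤ δ₁(t) ≤ δ_{1M} and ε₀ ≤ p(t) ≤ p_M for all t ≥ 0. Then the total population is bounded and bounded away from zero: there exist constants 0 < m ≤ M < ∞ such that m ≤ N(t) ≤ M for all t ≥ 0; in particular N does not tend to +∞ and does not tend to 0. -/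
open Set Filter Topology

/-- If `f 0 < M` and whenever `f t = M` (for `t > 0`) the derivative is negative,
then `f` stays below `M` on `[0, ∞)`. -/
lemma no_cross_up (f f' : ℝ → ℝ) (M : ℝ)
    (hf : ∀ t : ℝ, 0 ≤ t → HasDerivAt f (f' t) t)
    (h0 : f 0 < M)
    (hM : ∀ t : ℝ, 0 < t → f t = M → f' t < 0) :
    ∀ t : ℝ, 0 ≤ t → f t < M := by
  by_contra h
  push_neg at h
  obtain ⟨t1, ht1, hft1⟩ := h
  have hcont : ∀ t : ℝ, 0 ≤ t → ContinuousAt f t := fun t ht => (hf t ht).continuousAt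
  set A : Set ℝ := Icc 0 t1 ∩ f ⁻¹' Ici M with hA
  have hAne : A.Nonempty := ⟨t1, ⟨ht1, le_rfl⟩, hft1⟩
  have hAclosed : IsClosed A := by
    apply ContinuousOn.preimage_isClosed_of_isClosed _ isClosed_Icc isClosed_Ici
    exact fun x hx => (hcont x hx.1).continuousWithinAt
  have hAbdd : BddBelow A := ⟨0, fun x hx => hx.1.1⟩
  set s := sInf A with hs
  have hsA : s ∈ A := hAclosed.csInf_mem hAne hAbdd
  have hs0 : 0 ≤ s := hsA.1.1
  have hfsM : M ≤ f s := hsA.2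
  have hsne : s ≠ 0 := by
    intro h'
    rw [h'] at hfsM
    linarith
  have hspos : 0 < s := lt_of_le_of_ne hs0 (Ne.symm hsne)
  have hless : ∀ u : ℝ, 0 ≤ u → u < s → f u < M := by
    intro u hu hus
    by_contra h'
    push_neg at h'
    have : u ∈ A := ⟨⟨hu, hus.le.trans hsA.1.2⟩, h'⟩
    exact absurd (csInf_le hAbdd this) (not_le.mpr hus)
  -- f s ≤ M from the left limit
  have hfle : f s ≤ M := by
    have htend : Tendsto f (𝓝[<] s) (𝓝 (f s)) :=
      ((hcont s hs0).continuousWithinAt).tendsto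
    refine le_of_tendsto htend ?_
    have hmem : Ioo 0 s ∈ 𝓝[<] s := Ioo_mem_nhdsLT_of_mem ⟨hspos, le_rfl⟩
    filter_upwards [hmem] with u hu
    exact (hless u hu.1.le hu.2).le
  have hfeq : f s = M := le_antisymm hfle hfsM
  have hneg : f' s < 0 := hM s hspos hfeq
  -- but the derivative from the left is nonnegative
  have hderiv : HasDerivWithinAt f (f' s) (Iio s) s := (hf s hs0).hasDerivWithinAt
  have hdss : Iio s \ {s} = Iio s := diff_singleton_eq_self (fun h => lt_irrefl s h)
  have htendslope : Tendsto (slope f s) (𝓝[<] s) (𝓝 (f' s)) := by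
    have := hasDerivWithinAt_iff_tendsto_slope.mp hderiv
    rwa [hdss] at this
  have hnonneg : 0 ≤ f' s := by
    refine ge_of_tendsto htendslope ?_
    have hmem : Ioo 0 s ∈ 𝓝[<] s := Ioo_mem_nhdsLT_of_mem ⟨hspos, le_rfl⟩
    filter_upwards [hmem] with u hu
    have hfu : f u < M := hless u hu.1.le hu.2
    have hs1 : slope f s u = (f u - f s) / (u - s) := slope_def_field f s u
    rw [hs1, div_nonneg_iff]
    right
    exact ⟨by linarith, by linarith [hu.2]⟩
  linarith

/-- mirror lemma: lower bound -/
lemma no_cross_down (f f' : ℝ → ℝ) (m : ℝ)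
    (hf : ∀ t : ℝ, 0 ≤ t → HasDerivAt f (f' t) t)
    (h0 : m < f 0)
    (hm : ∀ t : ℝ, 0 < t → f t = m → 0 < f' t) :
    ∀ t : ℝ, 0 ≤ t → m < f t := by
  have := no_cross_up (fun t => -f t) (fun t => -f' t) (-m)
    (fun t ht => (hf t ht).neg) (by simpa using h0)
    (fun t ht h' => by
      have hft : f t = m := neg_injective h'
      simpa using hm t ht hft)
  intro t ht
  have := this t ht
  simpa using this

/-- Persistence and boundedness of the infection-free population: if `I(0) = 0`
(so `N = S` obeys `N' = r (1 - δ₁ N / p) N`), `N(0) > 0`, `r > 0` on `[0, ∞)` and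
`0 < δ_{1m} ≤ δ₁(t) ≤ δ_{1M}`, `0 < ε₀ ≤ p(t) ≤ p_M` on `[0, ∞)`, then the total
population is bounded and bounded away from zero; in particular it tends neither
to `+∞` nor to `0`. -/
theorem sis_infection_free_persistence
    (r d γ β δ1 δ2 p S I : ℝ → ℝ)
    (hrc : Continuous r) (hdc : Continuous d) (hγc : Continuous γ) (hβc : Continuous β)
    (hδ1c : Continuous δ1) (hδ2c : Continuous δ2) (hpc : Continuous p)
    (hppos : ∀ t : ℝ, 0 ≤ t → 0 < p t)
    (hS : ∀ t : ℝ, 0 ≤ t →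
      HasDerivAt S (r t * (1 - (δ1 t * S t + δ2 t * I t) / p t) * S t
        + (γ t - β t * S t) * I t) t)
    (hI : ∀ t : ℝ, 0 ≤ t → HasDerivAt I ((β t * S t - d t - γ t) * I t) t)
    (hI0 : I 0 = 0) (hN0 : 0 < S 0 + I 0)
    (hr : ∀ t : ℝ, 0 ≤ t → 0 < r t)
    (δ1m δ1M ε₀ pM : ℝ) (hδ1m : 0 < δ1m) (hδ1mM : δ1m ≤ δ1M)
    (hε₀ : 0 < ε₀) (hε₀pM : ε₀ ≤ pM)
    (hδ1 : ∀ t : ℝ, 0 ≤ t → δ1m ≤ δ1 t ∧ δ1 t ≤ δ1M)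
    (hp : ∀ t : ℝ, 0 ≤ t → ε₀ ≤ p t ∧ p t ≤ pM) :
    (∃ m M : ℝ, 0 < m ∧ m ≤ M ∧
      ∀ t : ℝ, 0 ≤ t → m ≤ S t + I t ∧ S t + I t ≤ M) ∧
    ¬ Filter.Tendsto (fun t => S t + I t) Filter.atTop Filter.atTop ∧
    ¬ Filter.Tendsto (fun t => S t + I t) Filter.atTop (nhds 0) := by
  -- Step 1: I vanishes on [0, ∞) by Grönwall.
  have hIzero : ∀ t : ℝ, 0 ≤ t → I t = 0 := by
    intro T hT
    have hcS : ContinuousOn S (Icc 0 T) := fun x hx =>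
      ((hS x hx.1).continuousAt).continuousWithinAt
    have hcI : ContinuousOn I (Icc 0 T) := fun x hx =>
      ((hI x hx.1).continuousAt).continuousWithinAt
    have hca : ContinuousOn (fun t => β t * S t - d t - γ t) (Icc 0 T) :=
      ((hβc.continuousOn.mul hcS).sub hdc.continuousOn).sub hγc.continuousOn
    obtain ⟨C, hC⟩ := isCompact_Icc.exists_bound_of_continuousOn hca
    have key := norm_le_gronwallBound_of_norm_deriv_right_le (f := I)
      (f' := fun t => (β t * S t - d t - γ t) * I t) (δ := 0) (K := C) (ε := 0)
      (a := 0) (b := T) hcI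
      (fun x hx => (hI x hx.1).hasDerivWithinAt)
      (by simp [hI0])
      (fun x hx => by
        have h1 := hC x ⟨hx.1, hx.2.le⟩
        have h2 : ‖(β x * S x - d x - γ x) * I x‖
            = ‖β x * S x - d x - γ x‖ * ‖I x‖ := norm_mul _ _
        rw [h2]
        have : ‖β x * S x - d x - γ x‖ * ‖I x‖ ≤ C * ‖I x‖ :=
          mul_le_mul_of_nonneg_right h1 (norm_nonneg _)
        linarith)
    have := key T ⟨hT, le_rfl⟩
    rw [gronwallBound_ε0_δ0] at this
    have h0 : 0 ≤ ‖I T‖ := norm_nonneg _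
    have : ‖I T‖ = 0 := le_antisymm this h0
    simpa using this
  have hS0pos : 0 < S 0 := by rw [hI0] at hN0; linarith
  -- the effective derivative of S on [0, ∞)
  set F : ℝ → ℝ := fun t => r t * (1 - δ1 t * S t / p t) * S t with hF
  have hS' : ∀ t : ℝ, 0 ≤ t → HasDerivAt S (F t) t := by
    intro t ht
    have := hS t ht
    rw [hIzero t ht] at this
    simpa [hF] using this
  -- constants
  have hδ1Mpos : 0 < δ1M := lt_of_lt_of_le hδ1m hδ1mM
  have hpMpos : 0 < pM := lt_of_lt_of_le hε₀ hε₀pM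
  set m : ℝ := min (S 0) (ε₀ / δ1M) / 2 with hm
  set M : ℝ := 2 * max (S 0) (pM / δ1m) with hMdef
  have hmpos : 0 < m := by
    apply div_pos _ two_pos
    exact lt_min hS0pos (div_pos hε₀ hδ1Mpos)
  have hmS0 : m < S 0 := by
    have : min (S 0) (ε₀ / δ1M) ≤ S 0 := min_le_left _ _
    have h2 : m < min (S 0) (ε₀ / δ1M) := by
      rw [hm]
      linarith [lt_min hS0pos (div_pos hε₀ hδ1Mpos)]
    linarith
  have hS0M : S 0 < M := by
    have h1 : S 0 ≤ max (S 0) (pM / δ1m) := le_max_left _ _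
    have h2 : 0 < max (S 0) (pM / δ1m) := lt_of_lt_of_le hS0pos h1
    rw [hMdef]; linarith
  -- upper bound
  have hMpos : 0 < M := lt_trans hS0pos hS0M
  have hpMltδ1mM : pM < δ1m * M := by
    have h1 : pM / δ1m ≤ max (S 0) (pM / δ1m) := le_max_right _ _
    have h2 : pM ≤ δ1m * max (S 0) (pM / δ1m) := by
      rw [← div_le_iff₀' hδ1m]; exact h1
    rw [hMdef]; nlinarith
  have hupper : ∀ t : ℝ, 0 ≤ t → S t < M := by
    apply no_cross_up S F M hS' hS0M
    intro t ht hSt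
    have ht' := ht.le
    obtain ⟨hδ1l, hδ1u⟩ := hδ1 t ht'
    obtain ⟨hpl, hpu⟩ := hp t ht'
    have hptpos := hppos t ht'
    have hrt := hr t ht'
    have hq : 1 < δ1 t * S t / p t := by
      rw [hSt, lt_div_iff₀ hptpos, one_mul]
      calc p t ≤ pM := hpu
        _ < δ1m * M := hpMltδ1mM
        _ ≤ δ1 t * M := by nlinarith
    have : F t < 0 := by
      have hneg : 1 - δ1 t * S t / p t < 0 := by linarith
      have hStpos : 0 < S t := by rw [hSt]; exact hMpos
      simp only [hF]
      exact mul_neg_of_neg_of_pos (mul_neg_of_pos_of_neg hrt hneg) hStpos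
    exact this
  -- lower bound
  have hδ1Mm : δ1M * m < ε₀ := by
    have h1 : min (S 0) (ε₀ / δ1M) ≤ ε₀ / δ1M := min_le_right _ _
    have h2 : δ1M * (ε₀ / δ1M) = ε₀ := mul_div_cancel₀ _ (ne_of_gt hδ1Mpos)
    rw [hm]; nlinarith
  have hlower : ∀ t : ℝ, 0 ≤ t → m < S t := by
    apply no_cross_down S F m hS' hmS0
    intro t ht hSt
    have ht' := ht.le
    obtain ⟨hδ1l, hδ1u⟩ := hδ1 t ht'
    obtain ⟨hpl, hpu⟩ := hp t ht'
    have hptpos := hppos t ht'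
    have hrt := hr t ht'
    have hq : δ1 t * S t / p t < 1 := by
      rw [hSt, div_lt_one hptpos]
      calc δ1 t * m ≤ δ1M * m := by nlinarith
        _ < ε₀ := hδ1Mm
        _ ≤ p t := hpl
    have : 0 < F t := by
      have hpos : 0 < 1 - δ1 t * S t / p t := by linarith
      have hStpos : 0 < S t := by rw [hSt]; exact hmpos
      simp only [hF]
      positivity
    exact this
  -- conclusions
  have hbounds : ∀ t : ℝ, 0 ≤ t → m ≤ S t + I t ∧ S t + I t ≤ M := by
    intro t ht
    rw [hIzero t ht]
    exact ⟨by linarith [hlower t ht], by linarith [hupper t ht]⟩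
  refine ⟨⟨m, M, hmpos, by linarith, hbounds⟩, ?_, ?_⟩
  · intro h
    obtain ⟨t, ht1, ht2⟩ := ((h.eventually_gt_atTop M).and (eventually_ge_atTop (0 : ℝ))).exists
    exact absurd (hbounds t ht2).2 (not_le.mpr ht1)
  · intro h
    have hball : ∀ᶠ t in atTop, S t + I t < m :=
      h.eventually (eventually_lt_nhds hmpos)
    obtain ⟨t, ht1, ht2⟩ := (hball.and (eventually_ge_atTop (0 : ℝ))).exists
    exact absurd (hbounds t ht2).1 (not_le.mpr ht1)
end
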